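/- arXiv:2505.05116 — 3 statements merged into one kernel-verified Lean document; each statement's English description precedes it below -/
import Mathlib

section
/- Let Ω ⊂ ℝ^d be a bounded domain and ρ₁, ρ₂ ∈ L^∞(Ω) with essential infima positive. Suppose u₁, u₂ lie in a closed subspace V of H¹(Ω, ℝ^d), and for j = 1, 2 the bilinear identity ∫_Ω λ (∇·u_j)(∇·w) + 2μ ∇^s u_j : ∇^s w dx + ∫_Ω ρ_j u_j · w dx = ⟨g, w|_{Γ_N}⟩ holds for all w ∈ V, where λ, μ ∈ L^∞₊(Ω). Then ∫_Ω (ρ₁ − ρ₂) ‖u₂‖² dx ≥ ⟨g, u₂|_{Γ_N}⟩ − ⟨g, u₁|_{Γ_N}⟩ ≥ ∫_Ω (ρ₁ − ρ₂) ‖u₁‖² dx. -/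
open MeasureTheory
open scoped RealInnerProductSpace

/-- Divergence of a vector field on `ℝ^d`. -/
noncomputable def ediv {d : ℕ} (u : EuclideanSpace ℝ (Fin d) → EuclideanSpace ℝ (Fin d))
    (x : EuclideanSpace ℝ (Fin d)) : ℝ :=
  ∑ i, fderiv ℝ u x (EuclideanSpace.single i (1 : ℝ)) i

/-- Symmetric gradient `(∇u + (∇u)ᵀ)/2` of a vector field on `ℝ^d`. -/
noncomputable def symGrad {d : ℕ} (u : EuclideanSpace ℝ (Fin d) → EuclideanSpace ℝ (Fin d))
    (x : EuclideanSpace ℝ (Fin d)) : Matrix (Fin d) (Fin d) ℝ :=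
  fun i j =>
    (fderiv ℝ u x (EuclideanSpace.single j (1 : ℝ)) i
      + fderiv ℝ u x (EuclideanSpace.single i (1 : ℝ)) j) / 2

/-- Frobenius product of two matrices. -/
def frob {d : ℕ} (M N : Matrix (Fin d) (Fin d) ℝ) : ℝ := ∑ i, ∑ j, M i j * N i j

lemma ediv_sub' {d : ℕ} {u v : EuclideanSpace ℝ (Fin d) → EuclideanSpace ℝ (Fin d)}
    (hu : Differentiable ℝ u) (hv : Differentiable ℝ v) (x : EuclideanSpace ℝ (Fin d)) :
    ediv (u - v) x = ediv u x - ediv v x := by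
  have h : fderiv ℝ (u - v) x = fderiv ℝ u x - fderiv ℝ v x := fderiv_sub (hu x) (hv x)
  unfold ediv
  rw [h]
  simp [Finset.sum_sub_distrib]

lemma symGrad_sub' {d : ℕ} {u v : EuclideanSpace ℝ (Fin d) → EuclideanSpace ℝ (Fin d)}
    (hu : Differentiable ℝ u) (hv : Differentiable ℝ v) (x : EuclideanSpace ℝ (Fin d)) :
    symGrad (u - v) x = symGrad u x - symGrad v x := by
  have h : fderiv ℝ (u - v) x = fderiv ℝ u x - fderiv ℝ v x := fderiv_sub (hu x) (hv x)
  funext i j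
  simp only [symGrad, h, Matrix.sub_apply, ContinuousLinearMap.sub_apply, PiLp.sub_apply]
  ring

lemma frob_sub_left' {d : ℕ} (M N P : Matrix (Fin d) (Fin d) ℝ) :
    frob (M - N) P = frob M P - frob N P := by
  simp [frob, Matrix.sub_apply, sub_mul, Finset.sum_sub_distrib]

lemma frob_comm' {d : ℕ} (M N : Matrix (Fin d) (Fin d) ℝ) : frob M N = frob N M := by
  simp [frob, mul_comm]

lemma frob_self_nonneg' {d : ℕ} (M : Matrix (Fin d) (Fin d) ℝ) : 0 ≤ frob M M :=
  Finset.sum_nonneg fun _ _ => Finset.sum_nonneg fun _ _ => mul_self_nonneg _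

/-- The integrand of the elasticity bilinear form with density `ρ`. -/
noncomputable def elasForm {d : ℕ} (lam mu ρ : EuclideanSpace ℝ (Fin d) → ℝ)
    (v w : EuclideanSpace ℝ (Fin d) → EuclideanSpace ℝ (Fin d))
    (x : EuclideanSpace ℝ (Fin d)) : ℝ :=
  lam x * ediv v x * ediv w x + 2 * mu x * frob (symGrad v x) (symGrad w x)
    + ρ x * ⟪v x, w x⟫

lemma elasForm_comm' {d : ℕ} (lam mu ρ : EuclideanSpace ℝ (Fin d) → ℝ)
    (v w : EuclideanSpace ℝ (Fin d) → EuclideanSpace ℝ (Fin d)) (x : EuclideanSpace ℝ (Fin d)) :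
    elasForm lam mu ρ v w x = elasForm lam mu ρ w v x := by
  unfold elasForm
  rw [frob_comm', real_inner_comm]
  ring

lemma elasForm_sub_left' {d : ℕ} (lam mu ρ : EuclideanSpace ℝ (Fin d) → ℝ)
    {u v : EuclideanSpace ℝ (Fin d) → EuclideanSpace ℝ (Fin d)}
    (hu : Differentiable ℝ u) (hv : Differentiable ℝ v)
    (w : EuclideanSpace ℝ (Fin d) → EuclideanSpace ℝ (Fin d)) (x : EuclideanSpace ℝ (Fin d)) :
    elasForm lam mu ρ (u - v) w x = elasForm lam mu ρ u w x - elasForm lam mu ρ v w x := by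
  unfold elasForm
  rw [ediv_sub' hu hv, symGrad_sub' hu hv, frob_sub_left']
  simp only [Pi.sub_apply, inner_sub_left]
  ring

lemma elasForm_sub_right' {d : ℕ} (lam mu ρ : EuclideanSpace ℝ (Fin d) → ℝ)
    (v : EuclideanSpace ℝ (Fin d) → EuclideanSpace ℝ (Fin d))
    {u w : EuclideanSpace ℝ (Fin d) → EuclideanSpace ℝ (Fin d)}
    (hu : Differentiable ℝ u) (hw : Differentiable ℝ w) (x : EuclideanSpace ℝ (Fin d)) :
    elasForm lam mu ρ v (u - w) x = elasForm lam mu ρ v u x - elasForm lam mu ρ v w x := by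
  rw [elasForm_comm', elasForm_sub_left' lam mu ρ hu hw v x,
    elasForm_comm' lam mu ρ u v, elasForm_comm' lam mu ρ w v]

lemma elasForm_self_nonneg' {d : ℕ} {lam mu ρ : EuclideanSpace ℝ (Fin d) → ℝ}
    {x : EuclideanSpace ℝ (Fin d)} (hl : 0 ≤ lam x) (hm : 0 ≤ mu x) (hr : 0 ≤ ρ x)
    (w : EuclideanSpace ℝ (Fin d) → EuclideanSpace ℝ (Fin d)) :
    0 ≤ elasForm lam mu ρ w w x := by
  unfold elasForm
  have h1 : 0 ≤ lam x * ediv w x * ediv w x := by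
    rw [mul_assoc]; exact mul_nonneg hl (mul_self_nonneg _)
  have h2 : 0 ≤ 2 * mu x * frob (symGrad w x) (symGrad w x) :=
    mul_nonneg (by linarith) (frob_self_nonneg' _)
  have h3 : 0 ≤ ρ x * ⟪w x, w x⟫ := mul_nonneg hr real_inner_self_nonneg
  linarith

lemma elasForm_diff_density' {d : ℕ} (lam mu ρ σ : EuclideanSpace ℝ (Fin d) → ℝ)
    (v : EuclideanSpace ℝ (Fin d) → EuclideanSpace ℝ (Fin d)) (x : EuclideanSpace ℝ (Fin d)) :
    elasForm lam mu ρ v v x - elasForm lam mu σ v v x = (ρ x - σ x) * ‖v x‖ ^ 2 := by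
  unfold elasForm
  rw [real_inner_self_eq_norm_sq]
  ring

/-- Monotonicity relation for the elasticity system: if `u₁, u₂ ∈ V` satisfy the weak
formulations with densities `ρ₁, ρ₂` respectively (with the same Neumann functional `ℓ`),
then `∫ (ρ₁ − ρ₂)‖u₂‖² ≥ ℓ(u₂) − ℓ(u₁) ≥ ∫ (ρ₁ − ρ₂)‖u₁‖²`. -/
theorem stmt1 {d : ℕ} (hd : 2 ≤ d) (Ω : Set (EuclideanSpace ℝ (Fin d)))
    (hΩb : Bornology.IsBounded Ω) (hΩm : MeasurableSet Ω)
    (lam mu ρ₁ ρ₂ : EuclideanSpace ℝ (Fin d) → ℝ)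
    (hlam : ∃ c > (0 : ℝ), ∀ᵐ x ∂volume.restrict Ω, c ≤ lam x)
    (hmu : ∃ c > (0 : ℝ), ∀ᵐ x ∂volume.restrict Ω, c ≤ mu x)
    (hρ₁ : ∃ c > (0 : ℝ), ∀ᵐ x ∂volume.restrict Ω, c ≤ ρ₁ x)
    (hρ₂ : ∃ c > (0 : ℝ), ∀ᵐ x ∂volume.restrict Ω, c ≤ ρ₂ x)
    (hbdd : ∃ C : ℝ, ∀ᵐ x ∂volume.restrict Ω,
      lam x ≤ C ∧ mu x ≤ C ∧ ρ₁ x ≤ C ∧ ρ₂ x ≤ C)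
    (V : Submodule ℝ (EuclideanSpace ℝ (Fin d) → EuclideanSpace ℝ (Fin d)))
    (hdiff : ∀ v ∈ V, Differentiable ℝ v)
    (ℓ : (EuclideanSpace ℝ (Fin d) → EuclideanSpace ℝ (Fin d)) →ₗ[ℝ] ℝ)
    (u₁ u₂ : EuclideanSpace ℝ (Fin d) → EuclideanSpace ℝ (Fin d))
    (hu₁ : u₁ ∈ V) (hu₂ : u₂ ∈ V)
    (hint : ∀ v ∈ V, ∀ w ∈ V,
      Integrable (fun x => lam x * ediv v x * ediv w x) (volume.restrict Ω) ∧
      Integrable (fun x => mu x * frob (symGrad v x) (symGrad w x)) (volume.restrict Ω) ∧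
      Integrable (fun x => ρ₁ x * ⟪v x, w x⟫) (volume.restrict Ω) ∧
      Integrable (fun x => ρ₂ x * ⟪v x, w x⟫) (volume.restrict Ω))
    (hweak₁ : ∀ w ∈ V, ∫ x in Ω, (lam x * ediv u₁ x * ediv w x
        + 2 * mu x * frob (symGrad u₁ x) (symGrad w x)
        + ρ₁ x * ⟪u₁ x, w x⟫) = ℓ w)
    (hweak₂ : ∀ w ∈ V, ∫ x in Ω, (lam x * ediv u₂ x * ediv w x
        + 2 * mu x * frob (symGrad u₂ x) (symGrad w x)
        + ρ₂ x * ⟪u₂ x, w x⟫) = ℓ w) :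
    (ℓ u₂ - ℓ u₁ ≤ ∫ x in Ω, (ρ₁ x - ρ₂ x) * ‖u₂ x‖ ^ 2) ∧
    (∫ x in Ω, (ρ₁ x - ρ₂ x) * ‖u₁ x‖ ^ 2 ≤ ℓ u₂ - ℓ u₁) := by
  obtain ⟨cl, hcl, hl⟩ := hlam
  obtain ⟨cm, hcm, hm⟩ := hmu
  obtain ⟨c1, hc1, h1⟩ := hρ₁
  obtain ⟨c2, hc2, h2⟩ := hρ₂
  have hl0 : ∀ᵐ x ∂volume.restrict Ω, 0 ≤ lam x := hl.mono fun x hx => le_trans hcl.le hx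
  have hm0 : ∀ᵐ x ∂volume.restrict Ω, 0 ≤ mu x := hm.mono fun x hx => le_trans hcm.le hx
  have h10 : ∀ᵐ x ∂volume.restrict Ω, 0 ≤ ρ₁ x := h1.mono fun x hx => le_trans hc1.le hx
  have h20 : ∀ᵐ x ∂volume.restrict Ω, 0 ≤ ρ₂ x := h2.mono fun x hx => le_trans hc2.le hx
  have hd₁ : Differentiable ℝ u₁ := hdiff u₁ hu₁
  have hd₂ : Differentiable ℝ u₂ := hdiff u₂ hu₂
  have hwV : u₁ - u₂ ∈ V := V.sub_mem hu₁ hu₂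
  -- integrability of the bilinear integrands
  have I : ∀ v ∈ V, ∀ z ∈ V, Integrable (elasForm lam mu ρ₁ v z) (volume.restrict Ω)
      ∧ Integrable (elasForm lam mu ρ₂ v z) (volume.restrict Ω) := by
    intro v hv z hz
    obtain ⟨ha, hb, hc, hd'⟩ := hint v hv z hz
    have hb2 : Integrable (fun x => 2 * mu x * frob (symGrad v x) (symGrad z x))
        (volume.restrict Ω) := by
      simpa [mul_assoc] using hb.const_mul 2
    exact ⟨(ha.add hb2).add hc, (ha.add hb2).add hd'⟩
  -- values of the bilinear form from the weak formulations
  have v11 : ∫ x in Ω, elasForm lam mu ρ₁ u₁ u₁ x = ℓ u₁ := hweak₁ u₁ hu₁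
  have v12 : ∫ x in Ω, elasForm lam mu ρ₁ u₁ u₂ x = ℓ u₂ := hweak₁ u₂ hu₂
  have v21 : ∫ x in Ω, elasForm lam mu ρ₂ u₂ u₁ x = ℓ u₁ := hweak₂ u₁ hu₁
  have v22 : ∫ x in Ω, elasForm lam mu ρ₂ u₂ u₂ x = ℓ u₂ := hweak₂ u₂ hu₂
  have v12' : ∫ x in Ω, elasForm lam mu ρ₁ u₂ u₁ x = ℓ u₂ :=
    (integral_congr_ae (Filter.Eventually.of_forall fun x =>
      elasForm_comm' lam mu ρ₁ u₂ u₁ x)).trans v12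
  have v21' : ∫ x in Ω, elasForm lam mu ρ₂ u₁ u₂ x = ℓ u₁ :=
    (integral_congr_ae (Filter.Eventually.of_forall fun x =>
      elasForm_comm' lam mu ρ₂ u₁ u₂ x)).trans v21
  -- density-difference identities
  have dif₂ : ∫ x in Ω, (ρ₁ x - ρ₂ x) * ‖u₂ x‖ ^ 2
      = (∫ x in Ω, elasForm lam mu ρ₁ u₂ u₂ x) - ∫ x in Ω, elasForm lam mu ρ₂ u₂ u₂ x := by
    rw [← integral_sub (I u₂ hu₂ u₂ hu₂).1 (I u₂ hu₂ u₂ hu₂).2]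
    exact integral_congr_ae (Filter.Eventually.of_forall fun x =>
      (elasForm_diff_density' lam mu ρ₁ ρ₂ u₂ x).symm)
  have dif₁ : ∫ x in Ω, (ρ₁ x - ρ₂ x) * ‖u₁ x‖ ^ 2
      = (∫ x in Ω, elasForm lam mu ρ₁ u₁ u₁ x) - ∫ x in Ω, elasForm lam mu ρ₂ u₁ u₁ x := by
    rw [← integral_sub (I u₁ hu₁ u₁ hu₁).1 (I u₁ hu₁ u₁ hu₁).2]
    exact integral_congr_ae (Filter.Eventually.of_forall fun x =>
      (elasForm_diff_density' lam mu ρ₁ ρ₂ u₁ x).symm)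
  -- expansion of the quadratic forms at u₁ - u₂
  have expand : ∀ ρ : EuclideanSpace ℝ (Fin d) → ℝ,
      Integrable (elasForm lam mu ρ u₁ u₁) (volume.restrict Ω) →
      Integrable (elasForm lam mu ρ u₁ u₂) (volume.restrict Ω) →
      Integrable (elasForm lam mu ρ u₂ u₁) (volume.restrict Ω) →
      Integrable (elasForm lam mu ρ u₂ u₂) (volume.restrict Ω) →
      ∫ x in Ω, elasForm lam mu ρ (u₁ - u₂) (u₁ - u₂) x
        = (∫ x in Ω, elasForm lam mu ρ u₁ u₁ x) - (∫ x in Ω, elasForm lam mu ρ u₁ u₂ x)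
          - (∫ x in Ω, elasForm lam mu ρ u₂ u₁ x) + ∫ x in Ω, elasForm lam mu ρ u₂ u₂ x := by
    intro ρ i11 i12 i21 i22
    have hpt : ∀ x, elasForm lam mu ρ (u₁ - u₂) (u₁ - u₂) x
        = elasForm lam mu ρ u₁ u₁ x - elasForm lam mu ρ u₁ u₂ x
          - elasForm lam mu ρ u₂ u₁ x + elasForm lam mu ρ u₂ u₂ x := by
      intro x
      rw [elasForm_sub_left' lam mu ρ hd₁ hd₂ _ x,
        elasForm_sub_right' lam mu ρ u₁ hd₁ hd₂ x,
        elasForm_sub_right' lam mu ρ u₂ hd₁ hd₂ x]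
      ring
    calc ∫ x in Ω, elasForm lam mu ρ (u₁ - u₂) (u₁ - u₂) x
        = ∫ x in Ω, (elasForm lam mu ρ u₁ u₁ x - elasForm lam mu ρ u₁ u₂ x
            - elasForm lam mu ρ u₂ u₁ x + elasForm lam mu ρ u₂ u₂ x) :=
          integral_congr_ae (Filter.Eventually.of_forall hpt)
      _ = (∫ x in Ω, (elasForm lam mu ρ u₁ u₁ x - elasForm lam mu ρ u₁ u₂ x
            - elasForm lam mu ρ u₂ u₁ x)) + ∫ x in Ω, elasForm lam mu ρ u₂ u₂ x := by
          exact integral_add ((i11.sub i12).sub i21) i22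
      _ = ((∫ x in Ω, (elasForm lam mu ρ u₁ u₁ x - elasForm lam mu ρ u₁ u₂ x))
            - ∫ x in Ω, elasForm lam mu ρ u₂ u₁ x) + ∫ x in Ω, elasForm lam mu ρ u₂ u₂ x := by
          congr 1
          exact integral_sub (i11.sub i12) i21
      _ = (((∫ x in Ω, elasForm lam mu ρ u₁ u₁ x) - ∫ x in Ω, elasForm lam mu ρ u₁ u₂ x)
            - ∫ x in Ω, elasForm lam mu ρ u₂ u₁ x) + ∫ x in Ω, elasForm lam mu ρ u₂ u₂ x := by
          congr 2
          exact integral_sub i11 i12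
  have E₁ := expand ρ₁ (I u₁ hu₁ u₁ hu₁).1 (I u₁ hu₁ u₂ hu₂).1 (I u₂ hu₂ u₁ hu₁).1
    (I u₂ hu₂ u₂ hu₂).1
  have E₂ := expand ρ₂ (I u₁ hu₁ u₁ hu₁).2 (I u₁ hu₁ u₂ hu₂).2 (I u₂ hu₂ u₁ hu₁).2
    (I u₂ hu₂ u₂ hu₂).2
  -- nonnegativity of the quadratic forms
  have pos₁ : 0 ≤ ∫ x in Ω, elasForm lam mu ρ₁ (u₁ - u₂) (u₁ - u₂) x := by
    refine integral_nonneg_of_ae ?_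
    filter_upwards [hl0, hm0, h10] with x hx1 hx2 hx3
    exact elasForm_self_nonneg' hx1 hx2 hx3 _
  have pos₂ : 0 ≤ ∫ x in Ω, elasForm lam mu ρ₂ (u₁ - u₂) (u₁ - u₂) x := by
    refine integral_nonneg_of_ae ?_
    filter_upwards [hl0, hm0, h20] with x hx1 hx2 hx3
    exact elasForm_self_nonneg' hx1 hx2 hx3 _
  constructor
  · linarith [pos₁, E₁, v11, v12, v12', v22, dif₂]
  · linarith [pos₂, E₂, v11, v21, v21', v22, dif₁]
end

section
/- Under the setting of the elasticity Neumann-to-Dirichlet map with fixed Lamé parameters, for ρ₁ ≠ ρ₂ in E_{[a,b]}: ‖Λ_{ρ₁} − Λ_{ρ₂}‖_* / ‖ρ₁ − ρ₂‖_{L^∞(Ω)} ≥ inf over ζ in the unit sphere of E and τ₁, τ₂ ∈ E_{[a,b]} of sup over unit boundary loads g of max{ J(g, ζ, τ₁), J(g, −ζ, τ₂) }, where J(g, ζ, τ) = ∫_Ω ζ ‖u^g_τ‖² dx. -/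
open MeasureTheory
open scoped RealInnerProductSpace

/-- The quotient `‖Λ_{ρ₁} − Λ_{ρ₂}‖/‖ρ₁ − ρ₂‖_{L^∞}` is bounded below by the inf-sup
expression involving `J(g, ζ, τ) = ∫ ζ ‖u^g_τ‖²`, for `ρ₁ ≠ ρ₂` in `E_{[a,b]}`. -/
theorem stmt11 {α G : Type*} [MeasurableSpace α] (μ : Measure α) {m : ℕ}
    [NormedAddCommGroup G] [InnerProductSpace ℝ G]
    (Λ : Lp ℝ ⊤ μ → (G →L[ℝ] G))
    (sol : Lp ℝ ⊤ μ → G → α → EuclideanSpace ℝ (Fin m))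
    (hsa : ∀ (ρ : Lp ℝ ⊤ μ) (g h : G), ⟪Λ ρ g, h⟫ = ⟪g, Λ ρ h⟫)
    (hmono : ∀ ρ₁ ρ₂ : Lp ℝ ⊤ μ, ∀ g : G,
      ∫ x, (ρ₁ x - ρ₂ x) * ‖sol ρ₁ g x‖ ^ 2 ∂μ ≤ ⟪g, Λ ρ₂ g⟫ - ⟪g, Λ ρ₁ g⟫)
    (E : Submodule ℝ (Lp ℝ ⊤ μ)) [FiniteDimensional ℝ E]
    (a b : ℝ) (ha : 0 < a) (hab : a ≤ b)
    (ρ₁ ρ₂ : Lp ℝ ⊤ μ)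
    (h₁ : ρ₁ ∈ E ∧ ∀ᵐ x ∂μ, a ≤ ρ₁ x ∧ ρ₁ x ≤ b)
    (h₂ : ρ₂ ∈ E ∧ ∀ᵐ x ∂μ, a ≤ ρ₂ x ∧ ρ₂ x ≤ b)
    (hne : ρ₁ ≠ ρ₂) :
    (⨅ ζ : {ζ : Lp ℝ ⊤ μ // ζ ∈ E ∧ ‖ζ‖ = 1},
      ⨅ τ₁ : {τ : Lp ℝ ⊤ μ // τ ∈ E ∧ ∀ᵐ x ∂μ, a ≤ τ x ∧ τ x ≤ b},
        ⨅ τ₂ : {τ : Lp ℝ ⊤ μ // τ ∈ E ∧ ∀ᵐ x ∂μ, a ≤ τ x ∧ τ x ≤ b},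
          ⨆ g : {g : G // ‖g‖ = 1},
            ((max (∫ x, (ζ : Lp ℝ ⊤ μ) x * ‖sol (τ₁ : Lp ℝ ⊤ μ) (g : G) x‖ ^ 2 ∂μ)
                  (∫ x, (-(ζ : Lp ℝ ⊤ μ) : Lp ℝ ⊤ μ) x *
                    ‖sol (τ₂ : Lp ℝ ⊤ μ) (g : G) x‖ ^ 2 ∂μ) : ℝ) : EReal))
      ≤ ((‖Λ ρ₁ - Λ ρ₂‖ / ‖ρ₁ - ρ₂‖ : ℝ) : EReal) := by

  obtain ⟨h₁E, h₁ab⟩ := h₁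
  obtain ⟨h₂E, h₂ab⟩ := h₂
  have hd : (0:ℝ) < ‖ρ₁ - ρ₂‖ := norm_pos_iff.mpr (sub_ne_zero.mpr hne)
  set c : ℝ := ‖ρ₁ - ρ₂‖⁻¹ with hc
  have hcpos : 0 < c := inv_pos.mpr hd
  set ζ : Lp ℝ ⊤ μ := c • (ρ₁ - ρ₂) with hζ
  have hζE : ζ ∈ E := E.smul_mem _ (E.sub_mem h₁E h₂E)
  have hζn : ‖ζ‖ = 1 := by
    rw [hζ, norm_smul, Real.norm_eq_abs, abs_of_pos hcpos, hc,
      inv_mul_cancel₀ hd.ne']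
  refine le_trans (iInf_le _ ⟨ζ, hζE, hζn⟩) ?_
  refine le_trans (iInf_le _ ⟨ρ₁, h₁E, h₁ab⟩) ?_
  refine le_trans (iInf_le _ ⟨ρ₂, h₂E, h₂ab⟩) ?_
  refine iSup_le ?_
  rintro ⟨g, hg⟩
  rw [EReal.coe_le_coe_iff]
  set N := ‖Λ ρ₁ - Λ ρ₂‖ with hN
  have key : ∀ σ₁ σ₂ : Lp ℝ ⊤ μ,
      ⟪g, Λ σ₂ g⟫ - ⟪g, Λ σ₁ g⟫ ≤ ‖Λ σ₁ - Λ σ₂‖ := by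
    intro σ₁ σ₂
    have h1 : ⟪g, Λ σ₂ g⟫ - ⟪g, Λ σ₁ g⟫ = ⟪g, (Λ σ₂ - Λ σ₁) g⟫ := by
      simp [inner_sub_right]
    rw [h1]
    calc ⟪g, (Λ σ₂ - Λ σ₁) g⟫ ≤ |⟪g, (Λ σ₂ - Λ σ₁) g⟫| := le_abs_self _
      _ ≤ ‖g‖ * ‖(Λ σ₂ - Λ σ₁) g‖ := abs_real_inner_le_norm _ _
      _ ≤ ‖g‖ * (‖Λ σ₂ - Λ σ₁‖ * ‖g‖) := by
          gcongr; exact (Λ σ₂ - Λ σ₁).le_opNorm g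
      _ = ‖Λ σ₂ - Λ σ₁‖ := by rw [hg]; ring
      _ = ‖Λ σ₁ - Λ σ₂‖ := norm_sub_rev _ _
  -- first integral
  have e1 : (∫ x, ζ x * ‖sol ρ₁ g x‖ ^ 2 ∂μ)
      = c * ∫ x, (ρ₁ x - ρ₂ x) * ‖sol ρ₁ g x‖ ^ 2 ∂μ := by
    rw [← integral_const_mul]
    refine integral_congr_ae ?_
    filter_upwards [Lp.coeFn_smul c (ρ₁ - ρ₂), Lp.coeFn_sub ρ₁ ρ₂] with x hx hx2
    rw [hζ, hx, Pi.smul_apply, smul_eq_mul, hx2, Pi.sub_apply]; ring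
  have e2 : (∫ x, (-ζ) x * ‖sol ρ₂ g x‖ ^ 2 ∂μ)
      = c * ∫ x, (ρ₂ x - ρ₁ x) * ‖sol ρ₂ g x‖ ^ 2 ∂μ := by
    rw [← integral_const_mul]
    refine integral_congr_ae ?_
    filter_upwards [Lp.coeFn_neg ζ, Lp.coeFn_smul c (ρ₁ - ρ₂),
      Lp.coeFn_sub ρ₁ ρ₂] with x hx hx1 hx2
    rw [hx, Pi.neg_apply, hζ, hx1, Pi.smul_apply, smul_eq_mul, hx2, Pi.sub_apply]
    ring
  have b1 : (∫ x, ζ x * ‖sol ρ₁ g x‖ ^ 2 ∂μ) ≤ c * N := by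
    rw [e1]
    have := le_trans (hmono ρ₁ ρ₂ g) (key ρ₁ ρ₂)
    exact mul_le_mul_of_nonneg_left this hcpos.le
  have b2 : (∫ x, (-ζ) x * ‖sol ρ₂ g x‖ ^ 2 ∂μ) ≤ c * N := by
    rw [e2]
    have := le_trans (hmono ρ₂ ρ₁ g) (key ρ₂ ρ₁)
    rw [hN, norm_sub_rev]
    exact mul_le_mul_of_nonneg_left this hcpos.le
  have : N / ‖ρ₁ - ρ₂‖ = c * N := by rw [div_eq_mul_inv, mul_comm, hc]
  rw [this]
  exact max_le b1 b2
end

section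
/- Let H, K be Hilbert spaces and A : H → K, B : H → K bounded linear operators with ranges R(A), R(B). If R(A) ∩ R(B) = {0}, R(A) ≠ {0}, and both A* and B* are considered, then R(A) ⊄ R(B); consequently (by the standard range-norm characterization) there exists a sequence (g_n) in K with ‖A* g_n‖ → ∞ and ‖B* g_n‖ → 0. -/
open Filter

open ContinuousLinearMap in
lemma key_stmt19 {H K : Type*} [NormedAddCommGroup H] [InnerProductSpace ℝ H] [CompleteSpace H]
    [NormedAddCommGroup K] [InnerProductSpace ℝ K] [CompleteSpace K]
    (A B : H →L[ℝ] K)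
    (hinter : Set.range (A : H → K) ∩ Set.range (B : H → K) = {0})
    (hA : Set.range (A : H → K) ≠ {0})
    (C : ℝ) : ∃ g : K, C * ‖adjoint B g‖ < ‖adjoint A g‖ := by
  by_contra hcon
  push_neg at hcon
  -- replace C by a nonnegative constant
  set C' : ℝ := max C 0 with hC'
  have hC'0 : 0 ≤ C' := le_max_right _ _
  have hbound : ∀ g : K, ‖adjoint A g‖ ≤ C' * ‖adjoint B g‖ := fun g =>
    (hcon g).trans (mul_le_mul_of_nonneg_right (le_max_left _ _) (norm_nonneg _))
  obtain ⟨x, hx⟩ : ∃ x : H, A x ≠ 0 := by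
    by_contra hx; push_neg at hx
    apply hA
    apply Set.eq_singleton_iff_unique_mem.mpr
    exact ⟨⟨0, map_zero A⟩, by rintro y ⟨x, rfl⟩; exact hx x⟩
  set y : K := A x with hy
  -- the functional F g = ⟪y, g⟫
  set F : K →ₗ[ℝ] ℝ := (innerSL ℝ y).toLinearMap with hF
  set Badj : K →ₗ[ℝ] H := (adjoint B).toLinearMap with hBadj
  have hFval : ∀ g : K, F g = inner ℝ x (adjoint A g) := by
    intro g
    simp only [hF, ContinuousLinearMap.coe_coe, innerSL_apply_apply, hy]
    rw [adjoint_inner_right]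
  have hker : LinearMap.ker Badj ≤ LinearMap.ker F := by
    intro g hg
    have hg' : adjoint B g = 0 := hg
    have : ‖adjoint A g‖ ≤ 0 := by simpa [hg'] using hbound g
    have hA0 : adjoint A g = 0 := norm_le_zero_iff.mp this
    simp [LinearMap.mem_ker, hFval g, hA0]
  -- factor F through the range of B*
  set ℓ : LinearMap.range Badj →ₗ[ℝ] ℝ :=
    ((LinearMap.ker Badj).liftQ F hker) ∘ₗ Badj.quotKerEquivRange.symm.toLinearMap with hℓ
  have hℓval : ∀ (g : K) (h : Badj g ∈ LinearMap.range Badj), ℓ ⟨Badj g, h⟩ = F g := by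
    intro g h
    simp only [hℓ, LinearMap.coe_comp, LinearEquiv.coe_coe, Function.comp_apply,
      LinearMap.quotKerEquivRange_symm_apply_image]
    exact Submodule.liftQ_apply _ _ _
  have hℓbound : ∀ p : LinearMap.range Badj, ‖ℓ p‖ ≤ (‖x‖ * C') * ‖p‖ := by
    rintro ⟨_, g, rfl⟩
    rw [hℓval g ⟨g, rfl⟩]
    have h1 : ‖F g‖ ≤ ‖x‖ * ‖adjoint A g‖ := by
      rw [hFval g]
      exact (abs_real_inner_le_norm _ _)
    calc ‖F g‖ ≤ ‖x‖ * ‖adjoint A g‖ := h1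
      _ ≤ ‖x‖ * (C' * ‖adjoint B g‖) :=
          mul_le_mul_of_nonneg_left (hbound g) (norm_nonneg _)
      _ = (‖x‖ * C') * ‖(⟨Badj g, ⟨g, rfl⟩⟩ : LinearMap.range Badj)‖ := by
          rw [mul_assoc]; rfl
  set ℓc : (LinearMap.range Badj : Submodule ℝ H) →L[ℝ] ℝ :=
    ℓ.mkContinuous (‖x‖ * C') hℓbound with hℓc
  obtain ⟨φ, hφ, -⟩ := exists_extension_norm_eq (LinearMap.range Badj) ℓc
  set z : H := (InnerProductSpace.toDual ℝ H).symm φ with hz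
  have hzval : ∀ h : H, (inner ℝ z h : ℝ) = φ h := fun h =>
    InnerProductSpace.toDual_symm_apply
  have hyz : ∀ g : K, (inner ℝ y g : ℝ) = inner ℝ (B z) g := by
    intro g
    have h1 : (inner ℝ y g : ℝ) = F g := by simp [hF]
    have h2 : F g = φ (Badj g) := by
      rw [← hℓval g ⟨g, rfl⟩]
      have := hφ ⟨Badj g, ⟨g, rfl⟩⟩
      rw [this]
      rfl
    rw [h1, h2, ← hzval]
    have : (inner ℝ z (Badj g) : ℝ) = inner ℝ (adjoint B g) z := real_inner_comm _ _
    rw [this, adjoint_inner_left, real_inner_comm]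
  have hyB : y = B z := by
    have h0 : (inner ℝ (y - B z) (y - B z) : ℝ) = 0 := by
      rw [inner_sub_left]
      rw [hyz (y - B z)]
      ring
    exact sub_eq_zero.mp (inner_self_eq_zero.mp h0)
  have hymem : y ∈ Set.range (A : H → K) ∩ Set.range (B : H → K) :=
    ⟨⟨x, rfl⟩, ⟨z, hyB.symm⟩⟩
  rw [hinter] at hymem
  exact hx hymem

/-- If the ranges of two bounded operators between Hilbert spaces intersect trivially and
`R(A) ≠ {0}`, then `R(A) ⊄ R(B)` and there is a sequence `(gₙ)` with `‖A* gₙ‖ → ∞` and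
`‖B* gₙ‖ → 0`. -/
theorem stmt19 {H K : Type*} [NormedAddCommGroup H] [InnerProductSpace ℝ H] [CompleteSpace H]
    [NormedAddCommGroup K] [InnerProductSpace ℝ K] [CompleteSpace K]
    (A B : H →L[ℝ] K)
    (hinter : Set.range (A : H → K) ∩ Set.range (B : H → K) = {0})
    (hA : Set.range (A : H → K) ≠ {0}) :
    ¬ (Set.range (A : H → K) ⊆ Set.range (B : H → K)) ∧
    ∃ g : ℕ → K,
      Tendsto (fun n => ‖ContinuousLinearMap.adjoint A (g n)‖) atTop atTop ∧
      Tendsto (fun n => ‖ContinuousLinearMap.adjoint B (g n)‖) atTop (nhds 0) := by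
  constructor
  · intro hsub
    apply hA
    rw [← hinter]
    exact Set.eq_of_subset_of_subset (fun a ha => ⟨ha, hsub ha⟩) (fun a ha => ha.1)
  · have key := fun n : ℕ => key_stmt19 A B hinter hA (((n : ℝ) + 1) ^ 2)
    choose P hP using key
    have hApos : ∀ n, 0 < ‖ContinuousLinearMap.adjoint A (P n)‖ := by
      intro n
      refine lt_of_le_of_lt ?_ (hP n)
      positivity
    set g : ℕ → K := fun n =>
      (((n : ℝ) + 1) / ‖ContinuousLinearMap.adjoint A (P n)‖) • P n with hg
    have hn1 : ∀ n : ℕ, (0:ℝ) < (n : ℝ) + 1 := fun n => by positivity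
    have hAg : ∀ n, ‖ContinuousLinearMap.adjoint A (g n)‖ = (n : ℝ) + 1 := by
      intro n
      rw [hg]
      simp only [map_smul, norm_smul, Real.norm_eq_abs, abs_div]
      rw [abs_of_pos (hn1 n), abs_of_pos (hApos n)]
      exact div_mul_cancel₀ _ (hApos n).ne'
    have hBg : ∀ n, ‖ContinuousLinearMap.adjoint B (g n)‖ ≤ 1 / ((n : ℝ) + 1) := by
      intro n
      rw [hg]
      simp only [map_smul, norm_smul, Real.norm_eq_abs, abs_div]
      rw [abs_of_pos (hn1 n), abs_of_pos (hApos n)]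
      rw [div_mul_eq_mul_div, div_le_div_iff₀ (hApos n) (hn1 n)]
      have := (hP n).le
      calc ((n:ℝ) + 1) * ‖ContinuousLinearMap.adjoint B (P n)‖ * ((n:ℝ) + 1)
          = ((n:ℝ)+1)^2 * ‖ContinuousLinearMap.adjoint B (P n)‖ := by ring
        _ ≤ ‖ContinuousLinearMap.adjoint A (P n)‖ := this
        _ = 1 * ‖ContinuousLinearMap.adjoint A (P n)‖ := (one_mul _).symm
    refine ⟨g, ?_, ?_⟩
    · have : (fun n => ‖ContinuousLinearMap.adjoint A (g n)‖) = fun n : ℕ => (n : ℝ) + 1 :=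
        funext hAg
      rw [this]
      have hcast : Tendsto (fun n : ℕ => (n : ℝ)) atTop atTop := tendsto_natCast_atTop_atTop
      exact tendsto_atTop_add_const_right atTop 1 hcast
    · refine squeeze_zero (fun n => norm_nonneg _) hBg ?_
      exact tendsto_one_div_add_atTop_nhds_zero_nat
end
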